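/- Let A be an n×n real symmetric positive definite matrix and let S be an n×k real matrix (k ≤ n) with linearly independent columns, and let P_k = (I − S(SᵀAS)⁻¹SᵀA)(I − AS(SᵀAS)⁻¹Sᵀ) + S(SᵀAS)⁻¹Sᵀ be the limited memory preconditioner. Then P_k A S = S; in particular every nonzero vector in the column space of S is an eigenvector of P_k A with eigenvalue 1, so the preconditioned matrix P_k A has the eigenvalue 1 with eigenspace of dimension at least k. -/

import Mathlib

/-!
With `M = (SᵀAS)⁻¹`, the second factor of `P_k` annihilates `AS`, since `(I - ASMSᵀ)AS = AS - AS = 0`,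
while the last term sends `AS` to `SMSᵀAS = S`. So `P_k A` fixes the column space of `S`, whose
dimension is `k` because `S` is injective; `SᵀAS` is invertible because it is positive definite.
-/

open Matrix

namespace Matrix

variable {R K : Type*} [CommRing R] [Field K] {m n : Type*} [Fintype m] [Fintype n]

noncomputable def limitedMemoryPreconditioner [DecidableEq m] [DecidableEq n]
    (A : Matrix n n R) (S : Matrix n m R) : Matrix n n R :=
  (1 - S * (Sᵀ * A * S)⁻¹ * Sᵀ * A) * (1 - A * S * (Sᵀ * A * S)⁻¹ * Sᵀ) + S * (Sᵀ * A * S)⁻¹ * Sᵀ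

theorem limitedMemoryPreconditioner_mul_mul_self [DecidableEq m] [DecidableEq n]
    (A : Matrix n n R) (S : Matrix n m R) (h : IsUnit (Sᵀ * A * S).det) :
    limitedMemoryPreconditioner A S * A * S = S := by
  have hinv : (Sᵀ * (A * S))⁻¹ * (Sᵀ * (A * S)) = 1 := by
    simpa only [Matrix.mul_assoc] using nonsing_inv_mul _ h
  simp only [limitedMemoryPreconditioner, Matrix.add_mul, Matrix.sub_mul, Matrix.mul_sub,
    Matrix.one_mul, Matrix.mul_one, Matrix.mul_assoc, hinv]
  abel

theorem mulVec_eq_self_of_mem_range {M : Matrix n n R} {S : Matrix n m R} (h : M * S = S)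
    {x : n → R} (hx : x ∈ LinearMap.range S.mulVecLin) : M *ᵥ x = x := by
  obtain ⟨v, rfl⟩ := hx
  rw [mulVecLin_apply, mulVec_mulVec, h]

theorem range_mulVecLin_le_eigenspace_one [DecidableEq n] {M : Matrix n n R} {S : Matrix n m R}
    (h : M * S = S) : LinearMap.range S.mulVecLin ≤ Module.End.eigenspace (toLin' M) 1 :=
  fun _ hx => Module.End.mem_eigenspace_iff.mpr <| by
    rw [one_smul, toLin'_apply, mulVec_eq_self_of_mem_range h hx]

theorem card_le_finrank_eigenspace_one [DecidableEq n] {M : Matrix n n K} {S : Matrix n m K}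
    (hS : Function.Injective S.mulVec) (h : M * S = S) :
    Fintype.card m ≤ Module.finrank K (Module.End.eigenspace (toLin' M) 1) :=
  calc Fintype.card m = Module.finrank K (LinearMap.range S.mulVecLin) := by
        rw [LinearMap.finrank_range_of_inj hS, Module.finrank_fintype_fun_eq_card]
    _ ≤ _ := Submodule.finrank_mono (range_mulVecLin_le_eigenspace_one h)

end Matrix

theorem stmt_7_general (n k : ℕ)
    (A : Matrix (Fin n) (Fin n) ℝ) (hA : A.PosDef)
    (S : Matrix (Fin n) (Fin k) ℝ)
    (hS : LinearIndependent ℝ (fun j : Fin k => fun i : Fin n => S i j))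
    (P : Matrix (Fin n) (Fin n) ℝ)
    (hP : P = (1 - S * (Sᵀ * A * S)⁻¹ * Sᵀ * A) * (1 - A * S * (Sᵀ * A * S)⁻¹ * Sᵀ) +
      S * (Sᵀ * A * S)⁻¹ * Sᵀ) :
    P * A * S = S ∧
    (∀ x ∈ LinearMap.range S.mulVecLin, x ≠ 0 → (P * A) *ᵥ x = x) ∧
    k ≤ Module.finrank ℝ (Module.End.eigenspace (Matrix.toLin' (P * A)) 1) := by
  have hSinj : Function.Injective S.mulVec := mulVec_injective_iff.mpr hS
  have hgram : (Sᵀ * A * S).PosDef := by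
    simpa only [conjTranspose_eq_transpose_of_trivial] using hA.conjTranspose_mul_mul_same hSinj
  have hPAS : P * A * S = S :=
    hP ▸ limitedMemoryPreconditioner_mul_mul_self A S hgram.det_pos.ne'.isUnit
  refine ⟨hPAS, fun x hx _ => mulVec_eq_self_of_mem_range hPAS hx, ?_⟩
  simpa only [Fintype.card_fin] using card_le_finrank_eigenspace_one hSinj hPAS

theorem stmt_7 (n k : ℕ) (hk : k ≤ n)
    (A : Matrix (Fin n) (Fin n) ℝ) (hA : A.PosDef)
    (S : Matrix (Fin n) (Fin k) ℝ)
    (hS : LinearIndependent ℝ (fun j : Fin k => fun i : Fin n => S i j))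
    (P : Matrix (Fin n) (Fin n) ℝ)
    (hP : P = (1 - S * (Sᵀ * A * S)⁻¹ * Sᵀ * A) * (1 - A * S * (Sᵀ * A * S)⁻¹ * Sᵀ) +
      S * (Sᵀ * A * S)⁻¹ * Sᵀ) :
    P * A * S = S ∧
    (∀ x ∈ LinearMap.range S.mulVecLin, x ≠ 0 → (P * A) *ᵥ x = x) ∧
    k ≤ Module.finrank ℝ (Module.End.eigenspace (Matrix.toLin' (P * A)) 1) :=
  stmt_7_general n k A hA S hS P hP
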